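/- The bilinear form 𝔅 is symmetric (𝔅(τ, σ) = 𝔅(σ, τ) for all σ, τ ∈ P) if m ≡ 0 or 3 (mod 4), and antisymmetric (𝔅(τ, σ) = −𝔅(σ, τ) for all σ, τ ∈ P) if m ≡ 1 or 2 (mod 4). -/

import Mathlib

noncomputable section

/-- The spinor space `P`: complex functions on subsets of `Fin m`
(the fermionic Fock model of the exterior algebra of `ℂ^m`). -/
abbrev SpinorSpace (m : ℕ) := Finset (Fin m) → ℂ

/-- The creation operator `c_j`. -/
def creation {m : ℕ} (j : Fin m) (f : SpinorSpace m) : SpinorSpace m := fun S =>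
  if j ∈ S then (-1 : ℂ) ^ (S.filter fun i => i < j).card * f (S.erase j) else 0

/-- The annihilation operator `a_j`. -/
def annihilation {m : ℕ} (j : Fin m) (f : SpinorSpace m) : SpinorSpace m := fun S =>
  if j ∈ S then 0 else (-1 : ℂ) ^ (S.filter fun i => i < j).card * f (insert j S)

/-- The gamma operators `Γ_I`, `I = 1, …, 2m`, here indexed by `Fin (2 * m)` (0-based):
`Γ_j = c_j + a_j` and `Γ_{m+j} = i (c_j − a_j)` for `j = 1, …, m`. -/
def gammaOp {m : ℕ} (I : Fin (2 * m)) (f : SpinorSpace m) : SpinorSpace m :=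
  if h : (I : ℕ) < m then
    creation ⟨(I : ℕ), h⟩ f + annihilation ⟨(I : ℕ), h⟩ f
  else
    Complex.I • (creation ⟨(I : ℕ) - m, by have := I.isLt; omega⟩ f
      - annihilation ⟨(I : ℕ) - m, by have := I.isLt; omega⟩ f)

/-- The Hermitian inner product `⟨f, g⟩ = Σ_S conj (f S) * g S` on the spinor space. -/
def herm {m : ℕ} (f g : SpinorSpace m) : ℂ :=
  ∑ S : Finset (Fin m), (starRingEnd ℂ) (f S) * g S

/-- The composition `Γ_{I₁} ∘ Γ_{I₂} ∘ ⋯ ∘ Γ_{I_k}` corresponding to a list of indices. -/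
def gammaProd {m : ℕ} (l : List (Fin (2 * m))) : SpinorSpace m → SpinorSpace m :=
  l.foldr (fun I F => gammaOp I ∘ F) id

/-- The conjugation operator `κ`. -/
def conjOp {m : ℕ} (f : SpinorSpace m) : SpinorSpace m := fun S => (starRingEnd ℂ) (f S)

/-- The conjugate-linear operator `A = Γ_1 ∘ Γ_2 ∘ ⋯ ∘ Γ_m ∘ κ`. -/
def opA (m : ℕ) : SpinorSpace m → SpinorSpace m :=
  gammaProd (List.ofFn fun j : Fin m =>
    (⟨(j : ℕ), by have := j.isLt; omega⟩ : Fin (2 * m))) ∘ conjOp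

/-- The conjugate-linear operator `B = Γ_{m+1} ∘ Γ_{m+2} ∘ ⋯ ∘ Γ_{2m} ∘ κ`. -/
def opB (m : ℕ) : SpinorSpace m → SpinorSpace m :=
  gammaProd (List.ofFn fun j : Fin m =>
    (⟨m + (j : ℕ), by have := j.isLt; omega⟩ : Fin (2 * m))) ∘ conjOp

/-- The bilinear form `𝔄(σ, τ) = ⟨A σ, τ⟩`. -/
def formA {m : ℕ} (σ τ : SpinorSpace m) : ℂ := herm (opA m σ) τ

/-- The bilinear form `𝔅(σ, τ) = ⟨B σ, τ⟩`. -/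
def formB {m : ℕ} (σ τ : SpinorSpace m) : ℂ := herm (opB m σ) τ

/-!
Each `Γ_{m+k}` toggles the index `k` up to a sign, so `B σ (S) = iᵐ (-1)^{e(S)} conj (σ Sᶜ)` with
`e(S) = Σₖ #{i ≤ k | i ∉ S}`. Hence `𝔅(σ, τ)` pairs `σ (Sᶜ)` with `τ (S)`; swapping `σ` and `τ`
and reindexing by `S ↦ Sᶜ` multiplies every term by `(-1)^{e(S) + e(Sᶜ)} = (-1)^{1 + 2 + ⋯ + m}`,
and `1 + 2 + ⋯ + m = m(m+1)/2` is even exactly when `m ≡ 0, 3 (mod 4)`.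
-/

open Finset

def highIndex {m : ℕ} (j : Fin m) : Fin (2 * m) := ⟨m + j, by omega⟩

def lowSet (m n : ℕ) : Finset (Fin m) := {i | (i : ℕ) < n}

/-- Applying `Γ_{m+0}, …, Γ_{m+k-1}` first toggles every index below `k`, so the sign that
`Γ_{m+k}` then contributes counts the indices `i ≤ k` outside `S`. -/
def signExponent {m : ℕ} (n : ℕ) (S : Finset (Fin m)) : ℕ :=
  ∑ k ∈ lowSet m n, #({i ∈ Iic k | i ∉ S})

lemma gammaProd_append {m : ℕ} (l₁ l₂ : List (Fin (2 * m))) :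
    gammaProd (l₁ ++ l₂) = gammaProd l₁ ∘ gammaProd l₂ := by
  induction l₁ with
  | nil => rfl
  | cons I l ih => simp only [gammaProd, List.cons_append, List.foldr_cons] at ih ⊢; rw [ih]; rfl

lemma gammaOp_highIndex_apply {m : ℕ} (k : Fin m) (f : SpinorSpace m) (S : Finset (Fin m)) :
    gammaOp (highIndex k) f S =
      Complex.I * (-1) ^ (#{i ∈ S | i < k} + if k ∈ S then 0 else 1) * f (symmDiff S {k}) := by
  have hk : ¬ (m + (k : ℕ) < m) := by omega
  have hidx : (⟨m + (k : ℕ) - m, by omega⟩ : Fin m) = k := Fin.ext (by simp)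
  rw [gammaOp, highIndex, dif_neg hk]
  simp only [hidx, Pi.smul_apply, Pi.sub_apply, smul_eq_mul, creation, annihilation]
  by_cases h : k ∈ S
  · have : S.erase k = symmDiff S {k} := by
      ext i; by_cases i = k <;> simp_all [mem_symmDiff]
    simp [h, this, mul_assoc]
  · have : insert k S = symmDiff S {k} := by
      ext i; by_cases i = k <;> simp_all [mem_symmDiff]
    simp [h, this, pow_succ, mul_assoc]

lemma lowSet_succ {m n : ℕ} (hn : n < m) : lowSet m (n + 1) = insert ⟨n, hn⟩ (lowSet m n) := by
  ext i; simp [lowSet, Fin.ext_iff]; omega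

lemma lowSet_self (m : ℕ) : lowSet m m = univ := by
  ext i; simp [lowSet]

lemma signExponent_succ {m n : ℕ} (hn : n < m) (S : Finset (Fin m)) :
    signExponent (n + 1) S = signExponent n S + #{i ∈ Iic ⟨n, hn⟩ | i ∉ S} := by
  rw [signExponent, lowSet_succ hn, sum_insert (by simp [lowSet]), signExponent, add_comm]

lemma card_filter_lt_symmDiff_lowSet {m n : ℕ} (hn : n < m) (S : Finset (Fin m)) :
    #{i ∈ symmDiff S (lowSet m n) | i < ⟨n, hn⟩} +
        (if ⟨n, hn⟩ ∈ symmDiff S (lowSet m n) then 0 else 1) =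
      #{i ∈ Iic ⟨n, hn⟩ | i ∉ S} := by
  set k : Fin m := ⟨n, hn⟩
  have hlow : {i ∈ symmDiff S (lowSet m n) | i < k} = {i ∈ Iio k | i ∉ S} := by
    ext i
    simp only [mem_filter, mem_symmDiff, lowSet, mem_univ, true_and, mem_Iio, Fin.lt_def, k]
    tauto
  have hk : k ∈ symmDiff S (lowSet m n) ↔ k ∈ S := by simp [mem_symmDiff, lowSet, k]
  rw [hlow, ← Iio_insert, filter_insert]
  by_cases h : k ∈ S
  · simp [hk, h]
  · simp [hk, h, card_insert_of_notMem]

lemma gammaProd_highIndex_apply {m n : ℕ} (hn : n ≤ m) (g : SpinorSpace m) (S : Finset (Fin m)) :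
    gammaProd (List.ofFn fun j : Fin n => highIndex (Fin.castLE hn j)) g S =
      Complex.I ^ n * (-1) ^ signExponent n S * g (symmDiff S (lowSet m n)) := by
  induction n generalizing g S with
  | zero =>
    have h : lowSet m 0 = ⊥ := by simp [lowSet]
    rw [signExponent, h, symmDiff_bot]
    simp [gammaProd]
  | succ n ih =>
    have hn' : n < m := hn
    have hlast : Fin.castLE hn (Fin.last n) = ⟨n, hn'⟩ := rfl
    rw [List.ofFn_succ', List.concat_eq_append, gammaProd_append]
    simp only [Fin.castLE_castSucc, hlast, Function.comp_apply]
    rw [ih, gammaProd, List.foldr_cons, List.foldr_nil, Function.comp_id, gammaOp_highIndex_apply,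
      card_filter_lt_symmDiff_lowSet, symmDiff_assoc]
    have hlow : symmDiff (lowSet m n) {⟨n, hn'⟩} = lowSet m (n + 1) := by
      ext i; simp [lowSet, mem_symmDiff, Fin.ext_iff]; omega
    rw [hlow, signExponent_succ hn', pow_succ, pow_add]
    ring

lemma opB_apply (m : ℕ) (σ : SpinorSpace m) (S : Finset (Fin m)) :
    opB m σ S = Complex.I ^ m * (-1) ^ signExponent m S * starRingEnd ℂ (σ Sᶜ) := by
  change gammaProd (List.ofFn fun j : Fin m => highIndex (Fin.castLE le_rfl j)) (conjOp σ) S = _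
  rw [gammaProd_highIndex_apply, lowSet_self, ← top_eq_univ, symmDiff_top]
  rfl

lemma formB_eq_sum {m : ℕ} (σ τ : SpinorSpace m) :
    formB σ τ = ∑ S, (-Complex.I) ^ m * (-1) ^ signExponent m S * σ Sᶜ * τ S := by
  simp [formB, herm, opB_apply]

lemma signExponent_add_signExponent_compl {m : ℕ} (S : Finset (Fin m)) :
    signExponent m S + signExponent m Sᶜ = ∑ k : Fin m, ((k : ℕ) + 1) := by
  rw [signExponent, signExponent, lowSet_self, ← sum_add_distrib]
  refine sum_congr rfl fun k _ => ?_
  simp only [mem_compl, not_not]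
  rw [add_comm, card_filter_add_card_filter_not, Fin.card_Iic]

lemma formB_swap {m : ℕ} (σ τ : SpinorSpace m) :
    formB τ σ = (-1) ^ (∑ k : Fin m, ((k : ℕ) + 1)) * formB σ τ := by
  rw [formB_eq_sum, formB_eq_sum, mul_sum]
  refine Fintype.sum_bijective compl compl_involutive.bijective _ _ fun S => ?_
  have hsq : ((-1 : ℂ) ^ signExponent m Sᶜ) ^ 2 = 1 := by
    rw [← pow_mul, pow_mul', neg_one_sq, one_pow]
  rw [← signExponent_add_signExponent_compl S, compl_compl, pow_add]
  linear_combination -((-Complex.I) ^ m * (-1) ^ signExponent m S * τ Sᶜ * σ S) * hsq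

lemma even_sum_fin_succ_iff (m : ℕ) :
    Even (∑ k : Fin m, ((k : ℕ) + 1)) ↔ m % 4 = 0 ∨ m % 4 = 3 := by
  rw [Fin.sum_univ_eq_sum_range (· + 1)]
  induction m with
  | zero => simp
  | succ n ih => rw [sum_range_succ, Nat.even_add, ih, Nat.even_iff]; omega

theorem formB_symm_or_antisymm (m : ℕ) :
    (m % 4 = 0 ∨ m % 4 = 3 → ∀ σ τ : SpinorSpace m, formB τ σ = formB σ τ) ∧
    (m % 4 = 1 ∨ m % 4 = 2 → ∀ σ τ : SpinorSpace m, formB τ σ = -formB σ τ) := by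
  refine ⟨fun hm σ τ => ?_, fun hm σ τ => ?_⟩
  · rw [formB_swap, ((even_sum_fin_succ_iff m).2 hm).neg_one_pow, one_mul]
  · have hodd : Odd (∑ k : Fin m, ((k : ℕ) + 1)) :=
      Nat.not_even_iff_odd.1 fun h => by have := (even_sum_fin_succ_iff m).1 h; omega
    rw [formB_swap, hodd.neg_one_pow, neg_one_mul]
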